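/- arXiv:math/0602112 — 2 statements merged into one kernel-verified Lean document; each statement's English description precedes it below -/
import Mathlib

section
/- The formulas [t^r d_a, t^m⊗g] = m_a t^{r+m}⊗g (for g ∈ ġ) and [t^r d_a, t^m k_b] = m_a t^{r+m} k_b + δ_{ab} Σ_{p=0}^N r_p t^{r+m} k_p define an action of the Lie algebra D of vector fields on the (N+1)-torus on the Kassel central extension (R⊗ġ) ⊕ K by derivations; that is, the resulting linear map from D into linear operators on (R⊗ġ) ⊕ K is a Lie algebra homomorphism whose image consists of derivations of the bracket [f₁⊗g₁, f₂⊗g₂] = f₁f₂⊗[g₁,g₂] + (g₁|g₂) f₂ d(f₁), [(R⊗ġ)⊕K, K] = 0. -/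
noncomputable section

/-- Index set `{0, 1, ..., N}` for the variables of the torus. -/
abbrev TorIdx (N : ℕ) := Fin (N + 1)

/-- Laurent polynomials `ℂ[t₀^{±1}, ..., t_N^{±1}]`, realized as finitely supported
functions on the lattice `ℤ^{N+1}` of exponents (Fourier basis). -/
abbrev TorR (N : ℕ) := (TorIdx N → ℤ) →₀ ℂ

/-- The monomial `t^r = t₀^{r₀} ⋯ t_N^{r_N}`. -/
def tpow {N : ℕ} (r : TorIdx N → ℤ) : TorR N := Finsupp.single r 1

/-- Multiplication of Laurent polynomials. -/
def rmul {N : ℕ} (f g : TorR N) : TorR N :=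
  f.sum fun r a => g.sum fun m b => Finsupp.single (r + m) (a * b)

/-- The derivation `d_p = t_p ∂/∂t_p`, acting on monomials by `d_p (t^r) = r_p t^r`. -/
def dOp {N : ℕ} (p : TorIdx N) : TorR N →ₗ[ℂ] TorR N :=
  Finsupp.lsum ℂ fun r => (r p : ℂ) • Finsupp.lsingle r

/-- The space `Ω_R` of 1-forms on the torus: the free `R`-module with basis `k₀, ..., k_N`,
a 1-form `Σ_p f_p k_p` being recorded as the tuple of coefficients `(f_p)`. -/
abbrev TorOmega (N : ℕ) := TorIdx N → TorR N

/-- The map `d : R → Ω_R`, `d f = Σ_p t_p (∂f/∂t_p) k_p`. -/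
def dFull (N : ℕ) : TorR N →ₗ[ℂ] TorOmega N := LinearMap.pi fun p => dOp p

/-- The space `K = Ω_R / d(R)`. -/
abbrev TorK (N : ℕ) := TorOmega N ⧸ LinearMap.range (dFull N)

/-- The canonical projection `Ω_R → K`. -/
def kcl {N : ℕ} (ω : TorOmega N) : TorK N := Submodule.Quotient.mk ω

/-- The multi-loop space `R ⊗ ġ`, realized as finitely supported functions
`ℤ^{N+1} →₀ ġ`; the element `t^r ⊗ x` is `Finsupp.single r x`. -/
abbrev TorLoop (N : ℕ) (g : Type*) [AddCommGroup g] [Module ℂ g] := (TorIdx N → ℤ) →₀ g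

/-- The Lie algebra `D = ⊕_p R d_p` of vector fields on the torus; the vector field
`Σ_p f_p d_p` is recorded as the tuple of coefficients `(f_p)`. -/
abbrev TorD (N : ℕ) := TorIdx N → TorR N

/-- The divergence `Σ_p t_p ∂f_p/∂t_p` of a vector field `Σ_p f_p d_p`. -/
def divMap (N : ℕ) : TorD N →ₗ[ℂ] TorR N := ∑ p, (dOp p).comp (LinearMap.proj p)

/-- The Kassel bracket on `(R ⊗ ġ) ⊕ K`:
`[f₁ ⊗ g₁, f₂ ⊗ g₂] = f₁f₂ ⊗ [g₁,g₂] + (g₁|g₂)·(class of f₂ d(f₁))`, with `K` central. -/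
def kassel {N : ℕ} {g : Type*} [LieRing g] [LieAlgebra ℂ g]
    (B : LinearMap.BilinForm ℂ g) (x y : TorLoop N g × TorK N) :
    TorLoop N g × TorK N :=
  x.1.sum fun r a => y.1.sum fun m b =>
    (Finsupp.single (r + m) ⁅a, b⁆, B a b • kcl fun p => (r p : ℂ) • tpow (r + m))

/-- The Lie bracket of vector fields on the torus:
`[Σ_a f_a d_a, Σ_a g_a d_a]` has `b`-th component `Σ_a (f_a d_a(g_b) − g_a d_a(f_b))`. -/
def dBracket {N : ℕ} (X Y : TorD N) : TorD N :=
  fun b => ∑ a, (rmul (X a) (dOp a (Y b)) - rmul (Y a) (dOp a (X b)))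

section Aux



variable {N : ℕ}

lemma dOp_single (p : TorIdx N) (r : TorIdx N → ℤ) (c : ℂ) :
    dOp p (Finsupp.single r c) = (r p : ℂ) • Finsupp.single r c := by
  simp [dOp, Finsupp.smul_single]

lemma rmul_single_single (r m : TorIdx N → ℤ) (c e : ℂ) :
    rmul (Finsupp.single r c) (Finsupp.single m e) = Finsupp.single (r + m) (c * e) := by
  simp [rmul, Finsupp.sum_single_index]

lemma rmul_zero_left (f : TorR N) : rmul 0 f = 0 := by simp [rmul]

lemma rmul_zero_right (f : TorR N) : rmul f 0 = 0 := by simp [rmul]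

lemma rmul_add_left (f f' g : TorR N) : rmul (f + f') g = rmul f g + rmul f' g := by
  unfold rmul
  rw [Finsupp.sum_add_index']
  · intro r; simp
  · intro r c c'
    rw [← Finsupp.sum_add]
    congr 1; funext m e; rw [← Finsupp.single_add, add_mul]

lemma rmul_add_right (f g g' : TorR N) : rmul f (g + g') = rmul f g + rmul f g' := by
  unfold rmul
  rw [← Finsupp.sum_add]
  congr 1; funext r c
  rw [Finsupp.sum_add_index']
  · intro m; simp
  · intro m e e'; rw [← Finsupp.single_add, mul_add]

lemma rmul_smul_left (c : ℂ) (f g : TorR N) : rmul (c • f) g = c • rmul f g := by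
  unfold rmul
  rw [Finsupp.sum_smul_index', Finsupp.smul_sum]
  · congr 1; funext r e
    rw [Finsupp.smul_sum]
    congr 1; funext m e'
    rw [Finsupp.smul_single, smul_eq_mul, mul_assoc]; rw [smul_eq_mul]
  · intro r; simp

lemma rmul_smul_right (c : ℂ) (f g : TorR N) : rmul f (c • g) = c • rmul f g := by
  unfold rmul
  rw [Finsupp.smul_sum]
  congr 1; funext r e
  rw [Finsupp.sum_smul_index', Finsupp.smul_sum]
  · congr 1; funext m e'
    rw [Finsupp.smul_single, smul_eq_mul, mul_left_comm]; rw [smul_eq_mul]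
  · intro m; simp

lemma dOp_comm (a b : TorIdx N) (f : TorR N) : dOp a (dOp b f) = dOp b (dOp a f) := by
  induction f using Finsupp.induction_linear with
  | zero => simp
  | add f g hf hg => simp [hf, hg]
  | single r c => rw [dOp_single, map_smul, dOp_single, map_smul, dOp_single,
      smul_comm]


variable {g : Type*} [AddCommGroup g] [Module ℂ g]

/-- Multiplication of a loop element by a Laurent polynomial. -/
def mulLoop (f : TorR N) : TorLoop N g →ₗ[ℂ] TorLoop N g :=
  Finsupp.lsum ℂ fun m => f.sum fun r c => c • Finsupp.lsingle (r + m)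

/-- `d_a` on the loop space. -/
def dLoop (a : TorIdx N) : TorLoop N g →ₗ[ℂ] TorLoop N g :=
  Finsupp.lsum ℂ fun m => (m a : ℂ) • Finsupp.lsingle m

lemma dLoop_single (a : TorIdx N) (m : TorIdx N → ℤ) (x : g) :
    dLoop a (Finsupp.single m x) = (m a : ℂ) • Finsupp.single m x := by
  simp [dLoop]

lemma mulLoop_single (f : TorR N) (m : TorIdx N → ℤ) (x : g) :
    mulLoop f (Finsupp.single m x) = f.sum fun r c => Finsupp.single (r + m) (c • x) := by
  rw [mulLoop, Finsupp.lsum_single, LinearMap.finsupp_sum_apply]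
  congr 1; funext r c
  rw [LinearMap.smul_apply, Finsupp.lsingle_apply, Finsupp.smul_single]

lemma mulLoop_single_single (r : TorIdx N → ℤ) (c : ℂ) (m : TorIdx N → ℤ) (x : g) :
    mulLoop (Finsupp.single r c) (Finsupp.single m x) = Finsupp.single (r + m) (c • x) := by
  rw [mulLoop_single, Finsupp.sum_single_index]; simp

lemma mulLoop_zero : (mulLoop 0 : TorLoop N g →ₗ[ℂ] TorLoop N g) = 0 := by
  apply Finsupp.lhom_ext
  intro m x
  rw [mulLoop_single, Finsupp.sum_zero_index, LinearMap.zero_apply]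

lemma mulLoop_add (f f' : TorR N) :
    (mulLoop (f + f') : TorLoop N g →ₗ[ℂ] TorLoop N g) = mulLoop f + mulLoop f' := by
  unfold mulLoop
  rw [← map_add]
  congr 1; funext m
  rw [Pi.add_apply, Finsupp.sum_add_index']
  · intro r; simp
  · intro r c c'; rw [add_smul]

lemma mulLoop_smul (c : ℂ) (f : TorR N) :
    (mulLoop (c • f) : TorLoop N g →ₗ[ℂ] TorLoop N g) = c • mulLoop f := by
  unfold mulLoop
  rw [← map_smul]
  congr 1; funext m
  rw [Pi.smul_apply, Finsupp.sum_smul_index', Finsupp.smul_sum]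
  · congr 1; funext r e; rw [smul_eq_mul, mul_smul]
  · intro r; simp

/-- Multiplication by `f` as a linear map. -/
def mulR (f : TorR N) : TorR N →ₗ[ℂ] TorR N where
  toFun := rmul f
  map_add' := rmul_add_right f
  map_smul' c x := rmul_smul_right c f x

/-- The operator `L_X` on 1-forms. -/
def LOm (X : TorD N) : TorOmega N →ₗ[ℂ] TorOmega N :=
  LinearMap.pi fun p =>
    ∑ a, (mulR (X a)) ∘ₗ (dOp a ∘ₗ LinearMap.proj p - dOp p ∘ₗ LinearMap.proj a)

lemma LOm_apply (X : TorD N) (ω : TorOmega N) (p : TorIdx N) :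
    LOm X ω p = ∑ a, (rmul (X a) (dOp a (ω p)) - rmul (X a) (dOp p (ω a))) := by
  rw [LOm, LinearMap.pi_apply, LinearMap.sum_apply]
  congr 1; funext a
  rw [LinearMap.comp_apply, LinearMap.sub_apply, LinearMap.comp_apply, LinearMap.comp_apply,
    LinearMap.proj_apply, LinearMap.proj_apply, map_sub]
  rfl

lemma LOm_dFull (X : TorD N) (h : TorR N) : LOm X (dFull N h) = 0 := by
  funext p
  rw [LOm_apply]
  apply Finset.sum_eq_zero
  intro a _
  have : dFull N h a = dOp a h := rfl
  have h2 : dFull N h p = dOp p h := rfl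
  rw [this, h2, dOp_comm, sub_self]

def AK (X : TorD N) : TorK N →ₗ[ℂ] TorK N :=
  Submodule.liftQ _ ((LinearMap.range (dFull N)).mkQ ∘ₗ LOm X)
    (by rintro x ⟨h, rfl⟩
        rw [LinearMap.mem_ker, LinearMap.comp_apply, LOm_dFull, map_zero])

lemma AK_kcl (X : TorD N) (ω : TorOmega N) : AK X (kcl ω) = kcl (LOm X ω) := by
  rw [kcl, AK, Submodule.liftQ_apply, LinearMap.comp_apply, kcl, Submodule.mkQ_apply]

/-- The action on the loop part. -/
def Aloop (X : TorD N) : TorLoop N g →ₗ[ℂ] TorLoop N g :=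
  ∑ a, (mulLoop (X a)) ∘ₗ dLoop a

/-- The full action on `(R ⊗ g) ⊕ K`. -/
def Amap (X : TorD N) : (TorLoop N g × TorK N) →ₗ[ℂ] (TorLoop N g × TorK N) :=
  (Aloop X).prodMap (AK X)

lemma Aloop_add (X Y : TorD N) :
    (Aloop (X + Y) : TorLoop N g →ₗ[ℂ] TorLoop N g) = Aloop X + Aloop Y := by
  unfold Aloop
  rw [← Finset.sum_add_distrib]
  congr 1; funext a
  rw [Pi.add_apply, mulLoop_add, LinearMap.add_comp]

lemma Aloop_smul (c : ℂ) (X : TorD N) :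
    (Aloop (c • X) : TorLoop N g →ₗ[ℂ] TorLoop N g) = c • Aloop X := by
  unfold Aloop
  rw [Finset.smul_sum]
  congr 1; funext a
  rw [Pi.smul_apply, mulLoop_smul, LinearMap.smul_comp]

lemma LOm_add (X Y : TorD N) : LOm X + LOm Y = LOm (X + Y) := by
  apply LinearMap.ext; intro ω
  funext p
  rw [LinearMap.add_apply, Pi.add_apply, LOm_apply, LOm_apply, LOm_apply,
    ← Finset.sum_add_distrib]
  congr 1; funext a
  rw [Pi.add_apply, rmul_add_left, rmul_add_left]
  abel

lemma LOm_smul (c : ℂ) (X : TorD N) : c • LOm X = LOm (c • X) := by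
  apply LinearMap.ext; intro ω
  funext p
  rw [LinearMap.smul_apply, Pi.smul_apply, LOm_apply, LOm_apply, Finset.smul_sum]
  congr 1; funext a
  rw [Pi.smul_apply, rmul_smul_left, rmul_smul_left, smul_sub]

lemma AK_add (X Y : TorD N) : AK (X + Y) = AK X + AK Y := by
  apply Submodule.linearMap_qext
  apply LinearMap.ext; intro ω
  show AK (X + Y) (kcl ω) = (AK X + AK Y) (kcl ω)
  rw [LinearMap.add_apply, AK_kcl, AK_kcl, AK_kcl, ← LOm_add, LinearMap.add_apply]
  rfl

lemma AK_smul (c : ℂ) (X : TorD N) : AK (c • X) = c • AK X := by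
  apply Submodule.linearMap_qext
  apply LinearMap.ext; intro ω
  show AK (c • X) (kcl ω) = (c • AK X) (kcl ω)
  rw [LinearMap.smul_apply, AK_kcl, AK_kcl, ← LOm_smul, LinearMap.smul_apply]
  rfl

lemma Amap_add (X Y : TorD N) :
    (Amap (X + Y) : (TorLoop N g × TorK N) →ₗ[ℂ] _) = Amap X + Amap Y := by
  unfold Amap
  rw [Aloop_add, AK_add]
  apply LinearMap.ext; rintro ⟨u, κ⟩
  simp [LinearMap.prodMap_apply]

lemma Amap_smul (c : ℂ) (X : TorD N) :
    (Amap (c • X) : (TorLoop N g × TorK N) →ₗ[ℂ] _) = c • Amap X := by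
  unfold Amap
  rw [Aloop_smul, AK_smul]
  apply LinearMap.ext; rintro ⟨u, κ⟩
  simp [LinearMap.prodMap_apply]

lemma single_eq_smul_tpow (r : TorIdx N → ℤ) (c : ℂ) :
    Finsupp.single r c = c • tpow r := by
  rw [tpow, Finsupp.smul_single, smul_eq_mul, mul_one]

/-- Collapse of a sum over `Pi.single`. -/
lemma sum_pi_single_collapse {V : Type*} [AddCommMonoid V] (a : TorIdx N) (f : TorR N)
    (F : TorIdx N → TorR N → V) (hz : ∀ a', F a' 0 = 0) :
    ∑ a', F a' ((Pi.single a f : TorIdx N → TorR N) a') = F a f := by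
  rw [Finset.sum_eq_single a]
  · rw [Pi.single_eq_same]
  · intro b _ hb
    rw [Pi.single_eq_of_ne hb, hz]
  · intro h; exact absurd (Finset.mem_univ a) h

/-- Reduction of identities linear in a vector field to monomial vector fields. -/
lemma torD_ind {V : Type*} [AddCommGroup V] [Module ℂ V] {F G : TorD N → V}
    (hF : IsLinearMap ℂ F) (hG : IsLinearMap ℂ G)
    (h : ∀ a r, F (Pi.single a (tpow r)) = G (Pi.single a (tpow r))) : ∀ X, F X = G X := by
  have key : ∀ (a : TorIdx N) (f : TorR N), F (Pi.single a f) = G (Pi.single a f) := by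
    intro a f
    induction f using Finsupp.induction_linear with
    | zero =>
        rw [Pi.single_zero, hF.map_zero, hG.map_zero]
    | add f g hf hg =>
        have : (Pi.single a (f + g) : TorD N) = Pi.single a f + Pi.single a g := by
          rw [Pi.single_add]
        rw [this, hF.map_add, hG.map_add, hf, hg]
    | single r c =>
        have : (Pi.single a (Finsupp.single r c) : TorD N)
            = c • (Pi.single a (tpow r) : TorD N) := by
          rw [single_eq_smul_tpow, Pi.single_smul]
        rw [this, hF.map_smul, hG.map_smul, h]
  intro X
  have hX : X = ∑ a, Pi.single a (X a) := (Finset.univ_sum_single X).symm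
  rw [hX]
  rw [show F (∑ a, (Pi.single a (X a) : TorD N)) = (hF.mk' F) (∑ a, (Pi.single a (X a) : TorD N))
    from rfl]
  rw [show G (∑ a, (Pi.single a (X a) : TorD N)) = (hG.mk' G) (∑ a, (Pi.single a (X a) : TorD N))
    from rfl]
  rw [map_sum, map_sum]
  exact Finset.sum_congr rfl fun a _ => key a (X a)

lemma Aloop_monomial (a : TorIdx N) (r m : TorIdx N → ℤ) (x : g) :
    Aloop (Pi.single a (tpow r)) (Finsupp.single m x) = (m a : ℂ) • Finsupp.single (r + m) x := by
  rw [Aloop, LinearMap.sum_apply]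
  simp only [LinearMap.comp_apply]
  rw [sum_pi_single_collapse a (tpow r)
    (fun a' f => mulLoop f (dLoop a' (Finsupp.single m x)))
    (fun a' => by rw [mulLoop_zero]; rfl)]
  rw [dLoop_single, map_smul, tpow, mulLoop_single_single, one_smul]

lemma LOm_monomial (a : TorIdx N) (r : TorIdx N → ℤ) (ω : TorOmega N) (p : TorIdx N) :
    LOm (Pi.single a (tpow r)) ω p
      = rmul (tpow r) (dOp a (ω p)) - rmul (tpow r) (dOp p (ω a)) := by
  rw [LOm_apply]
  exact sum_pi_single_collapse a (tpow r)
    (fun a' f => rmul f (dOp a' (ω p)) - rmul f (dOp p (ω a')))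
    (fun a' => by rw [rmul_zero_left, rmul_zero_left, sub_zero])

lemma kcl_add (ω ω' : TorOmega N) : kcl (ω + ω') = kcl ω + kcl ω' := rfl
lemma kcl_smul (c : ℂ) (ω : TorOmega N) : kcl (c • ω) = c • kcl ω := rfl
lemma kcl_zero : (kcl 0 : TorK N) = 0 := rfl
lemma kcl_sub (ω ω' : TorOmega N) : kcl (ω - ω') = kcl ω - kcl ω' := rfl

lemma kcl_eq_kcl {ω ω' : TorOmega N} (h : TorR N) (hh : ω - ω' = dFull N h) :
    kcl ω = kcl ω' := by
  rw [kcl, kcl, Submodule.Quotient.eq]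
  exact ⟨h, hh.symm⟩

lemma dFull_apply (h : TorR N) (p : TorIdx N) : dFull N h p = dOp p h := rfl

lemma dOp_tpow (p : TorIdx N) (m : TorIdx N → ℤ) :
    dOp p (tpow m) = (m p : ℂ) • tpow m := by
  rw [tpow, dOp_single]

lemma rmul_tpow_tpow (r m : TorIdx N → ℤ) : rmul (tpow r) (tpow m) = tpow (r + m) := by
  rw [tpow, tpow, rmul_single_single, mul_one]; rfl

lemma Amap_loop_monomial (a : TorIdx N) (r m : TorIdx N → ℤ) (x : g) :
    Amap (Pi.single a (tpow r)) ((Finsupp.single m x, 0) : TorLoop N g × TorK N)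
      = ((m a : ℂ) • Finsupp.single (r + m) x, 0) := by
  rw [Amap, LinearMap.prodMap_apply, Aloop_monomial, map_zero]

lemma AK_monomial (a : TorIdx N) (r : TorIdx N → ℤ) (b : TorIdx N) (m : TorIdx N → ℤ) :
    AK (Pi.single a (tpow r)) (kcl (Pi.single b (tpow m)))
      = (m a : ℂ) • kcl (Pi.single b (tpow (r + m)))
        + (if a = b then kcl fun p => (r p : ℂ) • tpow (r + m) else 0) := by
  rw [AK_kcl]
  have hrhs : (m a : ℂ) • kcl (Pi.single b (tpow (r + m)))
      + (if a = b then kcl fun p => (r p : ℂ) • tpow (r + m) else 0)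
      = kcl ((m a : ℂ) • (Pi.single b (tpow (r + m)) : TorOmega N)
          + (if a = b then (fun p => (r p : ℂ) • tpow (r + m)) else 0)) := by
    rw [kcl_add, kcl_smul]
    congr 1
    split_ifs
    · rfl
    · exact kcl_zero.symm
  rw [hrhs]
  apply kcl_eq_kcl (if a = b then -(tpow (r + m)) else 0)
  funext p
  rw [Pi.sub_apply, dFull_apply, LOm_monomial]
  simp only [Pi.single_apply, Pi.add_apply, Pi.smul_apply, ite_apply, Pi.zero_apply,
    apply_ite (dOp a), apply_ite (dOp p), map_zero, map_neg, dOp_tpow, apply_ite (rmul (tpow r)),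
    rmul_zero_right, rmul_smul_right, rmul_tpow_tpow, smul_zero, smul_ite]
  split_ifs with h1 h2 h3 h4 h5 h6 h7 <;>
    first
      | (push_cast; module)
      | (simp_all; push_cast; module)


lemma Amap_K_monomial (a : TorIdx N) (r : TorIdx N → ℤ) (b : TorIdx N) (m : TorIdx N → ℤ) :
    Amap (Pi.single a (tpow r)) ((0, kcl (Pi.single b (tpow m))) : TorLoop N g × TorK N)
      = (0, (m a : ℂ) • kcl (Pi.single b (tpow (r + m)))
          + (if a = b then kcl fun p => (r p : ℂ) • tpow (r + m) else 0)) := by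
  rw [Amap, LinearMap.prodMap_apply, AK_monomial, map_zero]

lemma dBracket_add_left (X X' Y : TorD N) :
    dBracket (X + X') Y = dBracket X Y + dBracket X' Y := by
  funext b
  unfold dBracket
  conv_rhs => rw [Pi.add_apply]
  rw [← Finset.sum_add_distrib]
  congr 1; funext a
  simp only [Pi.add_apply, rmul_add_left, map_add, rmul_add_right]
  abel

lemma dBracket_add_right (X Y Y' : TorD N) :
    dBracket X (Y + Y') = dBracket X Y + dBracket X Y' := by
  funext b
  unfold dBracket
  conv_rhs => rw [Pi.add_apply]
  rw [← Finset.sum_add_distrib]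
  congr 1; funext a
  simp only [Pi.add_apply, rmul_add_left, map_add, rmul_add_right]
  abel

lemma dBracket_smul_left (c : ℂ) (X Y : TorD N) :
    dBracket (c • X) Y = c • dBracket X Y := by
  funext b
  unfold dBracket
  conv_rhs => rw [Pi.smul_apply]
  rw [Finset.smul_sum]
  congr 1; funext a
  simp only [Pi.smul_apply, rmul_smul_left, map_smul, rmul_smul_right, smul_sub]

lemma dBracket_smul_right (c : ℂ) (X Y : TorD N) :
    dBracket X (c • Y) = c • dBracket X Y := by
  funext b
  unfold dBracket
  conv_rhs => rw [Pi.smul_apply]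
  rw [Finset.smul_sum]
  congr 1; funext a
  simp only [Pi.smul_apply, rmul_smul_left, map_smul, rmul_smul_right, smul_sub]

lemma dBracket_monomial (a b : TorIdx N) (r s : TorIdx N → ℤ) :
    dBracket (Pi.single a (tpow r)) (Pi.single b (tpow s))
      = (s a : ℂ) • (Pi.single b (tpow (r + s)) : TorD N)
        + (-(r b : ℂ)) • (Pi.single a (tpow (r + s)) : TorD N) := by
  funext c
  unfold dBracket
  rw [Finset.sum_sub_distrib]
  rw [sum_pi_single_collapse a (tpow r)
    (fun a' f => rmul f (dOp a' ((Pi.single b (tpow s) : TorD N) c)))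
    (fun a' => by rw [rmul_zero_left])]
  rw [sum_pi_single_collapse b (tpow s)
    (fun a' f => rmul f (dOp a' ((Pi.single a (tpow r) : TorD N) c)))
    (fun a' => by rw [rmul_zero_left])]
  simp only [Pi.single_apply, Pi.add_apply, Pi.smul_apply, apply_ite (dOp a), apply_ite (dOp b),
    map_zero, dOp_tpow, apply_ite (rmul (tpow r)), apply_ite (rmul (tpow s)),
    rmul_zero_right, rmul_smul_right, rmul_tpow_tpow, smul_ite, smul_zero]
  simp only [show s + r = r + s from add_comm s r]
  split_ifs <;> push_cast <;> module

lemma rmul_sub_right (f x y : TorR N) : rmul f (x - y) = rmul f x - rmul f y := by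
  have := rmul_add_right f y (x - y); rw [add_sub_cancel] at this; rw [this]; abel

lemma LOm_add' (X Y : TorD N) : LOm (X + Y) = LOm X + LOm Y := (LOm_add X Y).symm
lemma LOm_smul' (c : ℂ) (X : TorD N) : LOm (c • X) = c • LOm X := (LOm_smul c X).symm

lemma hom_loop_mono (a b : TorIdx N) (r s : TorIdx N → ℤ) (u : TorLoop N g) :
    Aloop (dBracket (Pi.single a (tpow r)) (Pi.single b (tpow s))) u
      = Aloop (Pi.single a (tpow r)) (Aloop (Pi.single b (tpow s)) u)
        - Aloop (Pi.single b (tpow s)) (Aloop (Pi.single a (tpow r)) u) := by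
  induction u using Finsupp.induction_linear with
  | zero => simp
  | add u v hu hv => simp only [map_add, hu, hv]; abel
  | single m x =>
      rw [dBracket_monomial, Aloop_add, Aloop_smul, Aloop_smul]
      rw [LinearMap.add_apply, LinearMap.smul_apply, LinearMap.smul_apply]
      simp only [map_smul, Aloop_monomial]
      simp only [← add_assoc, show s + r = r + s from add_comm s r, Pi.add_apply]
      push_cast
      module

lemma hom_K_mono (a b : TorIdx N) (r s : TorIdx N → ℤ) (κ : TorK N) :
    AK (dBracket (Pi.single a (tpow r)) (Pi.single b (tpow s))) κ
      = AK (Pi.single a (tpow r)) (AK (Pi.single b (tpow s)) κ)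
        - AK (Pi.single b (tpow s)) (AK (Pi.single a (tpow r)) κ) := by
  obtain ⟨ω, rfl⟩ := Submodule.Quotient.mk_surjective _ κ
  rw [show (Submodule.Quotient.mk ω : TorK N) = kcl ω from rfl]
  have hF : IsLinearMap ℂ (fun ω : TorOmega N =>
      AK (dBracket (Pi.single a (tpow r)) (Pi.single b (tpow s))) (kcl ω)) := by
    constructor <;> intros <;> simp only [kcl_add, kcl_smul, map_add, map_smul]
  have hG : IsLinearMap ℂ (fun ω : TorOmega N =>
      AK (Pi.single a (tpow r)) (AK (Pi.single b (tpow s)) (kcl ω))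
        - AK (Pi.single b (tpow s)) (AK (Pi.single a (tpow r)) (kcl ω))) := by
    constructor <;> intros <;>
      simp only [kcl_add, kcl_smul, map_add, map_smul, smul_sub] <;> abel
  refine torD_ind hF hG ?_ ω
  intro c m
  rw [AK_kcl, AK_kcl, AK_kcl, AK_kcl, AK_kcl, ← kcl_sub]
  rw [dBracket_monomial, LOm_add', LOm_smul', LOm_smul']
  apply kcl_eq_kcl (((if a = c then (m b : ℂ) else 0) - (if b = c then (m a : ℂ) else 0))
    • tpow (r + s + m))
  funext p
  simp only [LinearMap.add_apply, LinearMap.smul_apply, Pi.sub_apply, Pi.add_apply,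
    Pi.smul_apply, dFull_apply, map_smul, neg_smul, one_smul]
  simp only [LOm_monomial]
  simp only [Pi.single_apply, apply_ite (dOp a), apply_ite (dOp b), apply_ite (dOp p),
    map_zero, dOp_tpow, map_sub, map_smul, rmul_sub_right, rmul_smul_right,
    apply_ite (rmul (tpow r)), apply_ite (rmul (tpow s)), apply_ite (rmul (tpow (r + s))), rmul_zero_right,
    rmul_tpow_tpow, smul_ite, smul_zero, smul_smul]
  simp only [show s + r = r + s from add_comm s r, ← add_assoc, Pi.add_apply]
  split_ifs <;> push_cast <;> module

lemma hom_mono_mono (a b : TorIdx N) (r s : TorIdx N → ℤ) :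
    (Amap (dBracket (Pi.single a (tpow r)) (Pi.single b (tpow s)))
      : (TorLoop N g × TorK N) →ₗ[ℂ] _)
      = Amap (Pi.single a (tpow r)) ∘ₗ Amap (Pi.single b (tpow s))
        - Amap (Pi.single b (tpow s)) ∘ₗ Amap (Pi.single a (tpow r)) := by
  apply LinearMap.ext; rintro ⟨u, κ⟩
  simp only [Amap, LinearMap.sub_apply, LinearMap.comp_apply, LinearMap.prodMap_apply,
    Prod.mk_sub_mk]
  exact Prod.ext (hom_loop_mono a b r s u) (hom_K_mono a b r s κ)

lemma Amap_hom (X Y : TorD N) :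
    (Amap (dBracket X Y) : (TorLoop N g × TorK N) →ₗ[ℂ] _)
      = Amap X ∘ₗ Amap Y - Amap Y ∘ₗ Amap X := by
  have step1 : ∀ (b : TorIdx N) (s : TorIdx N → ℤ) (X : TorD N),
      (Amap (dBracket X (Pi.single b (tpow s))) : (TorLoop N g × TorK N) →ₗ[ℂ] _)
        = Amap X ∘ₗ Amap (Pi.single b (tpow s)) - Amap (Pi.single b (tpow s)) ∘ₗ Amap X := by
    intro b s
    refine torD_ind (F := fun X => (Amap (dBracket X (Pi.single b (tpow s)))
        : (TorLoop N g × TorK N) →ₗ[ℂ] _))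
      (G := fun X => Amap X ∘ₗ Amap (Pi.single b (tpow s))
        - Amap (Pi.single b (tpow s)) ∘ₗ Amap X) ?_ ?_ ?_
    · constructor
      · intro X X'; rw [dBracket_add_left, Amap_add]
      · intro c X; rw [dBracket_smul_left, Amap_smul]
    · constructor
      · intro X X'
        rw [Amap_add, LinearMap.add_comp, LinearMap.comp_add]
        abel
      · intro c X
        rw [Amap_smul, LinearMap.smul_comp, LinearMap.comp_smul, smul_sub]
    · intro a r; exact hom_mono_mono a b r s
  refine torD_ind (F := fun Y => (Amap (dBracket X Y) : (TorLoop N g × TorK N) →ₗ[ℂ] _))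
    (G := fun Y => Amap X ∘ₗ Amap Y - Amap Y ∘ₗ Amap X) ?_ ?_ ?_ Y
  · constructor
    · intro Y Y'; rw [dBracket_add_right, Amap_add]
    · intro c Y; rw [dBracket_smul_right, Amap_smul]
  · constructor
    · intro Y Y'
      rw [Amap_add, LinearMap.add_comp, LinearMap.comp_add]
      abel
    · intro c Y
      rw [Amap_smul, LinearMap.smul_comp, LinearMap.comp_smul, smul_sub]
  · intro b s; exact step1 b s X

section Kassel

variable {gl : Type*} [LieRing gl] [LieAlgebra ℂ gl] (B : LinearMap.BilinForm ℂ gl)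


lemma kassel_inner_zero (r : TorIdx N → ℤ) (w : TorLoop N gl) :
    (w.sum fun m b =>
      ((Finsupp.single (r + m) ⁅(0 : gl), b⁆ : TorLoop N gl),
        B 0 b • kcl fun p => (r p : ℂ) • tpow (r + m))) = 0 := by
  apply Finset.sum_eq_zero
  intro m _
  simp

lemma kassel_single_single (m₁ m₂ : TorIdx N → ℤ) (x y : gl) (κ₁ κ₂ : TorK N) :
    kassel B ((Finsupp.single m₁ x, κ₁) : TorLoop N gl × TorK N) (Finsupp.single m₂ y, κ₂)
      = (Finsupp.single (m₁ + m₂) ⁅x, y⁆,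
          B x y • kcl fun p => (m₁ p : ℂ) • tpow (m₁ + m₂)) := by
  unfold kassel
  rw [Finsupp.sum_single_index, Finsupp.sum_single_index]
  · simp
  · exact kassel_inner_zero B m₁ (Finsupp.single m₂ y)

lemma kassel_zero_left (κ : TorK N) (v : TorLoop N gl × TorK N) :
    kassel B ((0, κ) : TorLoop N gl × TorK N) v = 0 := by
  unfold kassel
  exact Finsupp.sum_zero_index

lemma kassel_zero_right (κ : TorK N) (u : TorLoop N gl × TorK N) :
    kassel B u ((0, κ) : TorLoop N gl × TorK N) = 0 := by
  unfold kassel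
  simp [Finsupp.sum_zero_index]

lemma kassel_fst (u v : TorLoop N gl × TorK N) (κ κ' : TorK N) :
    kassel B (u.1, κ) (v.1, κ') = kassel B u v := rfl

lemma kassel_add_left (u u' v : TorLoop N gl × TorK N) :
    kassel B (u + u') v = kassel B u v + kassel B u' v := by
  unfold kassel
  rw [show (u + u').1 = u.1 + u'.1 from rfl, Finsupp.sum_add_index']
  · intro r; exact kassel_inner_zero B r v.1
  · intro r x x'
    rw [← Finsupp.sum_add]
    congr 1; funext m b
    simp [add_lie, Finsupp.single_add, add_smul, Prod.mk_add_mk, map_add, LinearMap.add_apply]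

lemma kassel_smul_left (c : ℂ) (u v : TorLoop N gl × TorK N) :
    kassel B (c • u) v = c • kassel B u v := by
  unfold kassel
  rw [show (c • u).1 = c • u.1 from rfl, Finsupp.sum_smul_index', Finsupp.smul_sum]
  · congr 1; funext r x
    rw [Finsupp.smul_sum]
    congr 1; funext m b
    simp [smul_lie, Finsupp.smul_single, smul_smul, Prod.smul_mk, map_smul,
      LinearMap.smul_apply, smul_eq_mul]
  · intro r; exact kassel_inner_zero B r v.1

lemma kassel_add_right (u v v' : TorLoop N gl × TorK N) :
    kassel B u (v + v') = kassel B u v + kassel B u v' := by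
  unfold kassel
  rw [← Finsupp.sum_add]
  congr 1; funext r x
  rw [show (v + v').1 = v.1 + v'.1 from rfl, Finsupp.sum_add_index']
  · intro m; simp
  · intro m b b'
    simp [lie_add, Finsupp.single_add, add_smul, Prod.mk_add_mk, map_add]

lemma kassel_smul_right (c : ℂ) (u v : TorLoop N gl × TorK N) :
    kassel B u (c • v) = c • kassel B u v := by
  unfold kassel
  rw [Finsupp.smul_sum]
  congr 1; funext r x
  rw [show (c • v).1 = c • v.1 from rfl, Finsupp.sum_smul_index', Finsupp.smul_sum]
  · congr 1; funext m b
    simp [lie_smul, Finsupp.smul_single, smul_smul, Prod.smul_mk, map_smul, smul_eq_mul,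
      mul_comm]
  · intro m; simp

end Kassel

section Deriv

variable {gl : Type*} [LieRing gl] [LieAlgebra ℂ gl] (B : LinearMap.BilinForm ℂ gl)

lemma Amap_pair (X : TorD N) (w : TorLoop N gl) (κ : TorK N) :
    Amap X ((w, κ) : TorLoop N gl × TorK N) = (Aloop X w, AK X κ) := rfl

lemma deriv_single_single (a : TorIdx N) (r m₁ m₂ : TorIdx N → ℤ) (x y : gl) :
    Amap (Pi.single a (tpow r))
        (kassel B ((Finsupp.single m₁ x, 0) : TorLoop N gl × TorK N) (Finsupp.single m₂ y, 0))
      = kassel B (Amap (Pi.single a (tpow r)) (Finsupp.single m₁ x, 0)) (Finsupp.single m₂ y, 0)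
        + kassel B ((Finsupp.single m₁ x, 0) : TorLoop N gl × TorK N)
            (Amap (Pi.single a (tpow r)) (Finsupp.single m₂ y, 0)) := by
  rw [kassel_single_single, Amap_pair, Aloop_monomial, map_smul, AK_kcl]
  rw [Amap_loop_monomial, Amap_loop_monomial]
  rw [show (((m₁ a : ℂ) • Finsupp.single (r + m₁) x, 0) : TorLoop N gl × TorK N)
      = (m₁ a : ℂ) • ((Finsupp.single (r + m₁) x, 0) : TorLoop N gl × TorK N) by
    rw [Prod.smul_mk, smul_zero]]
  rw [show (((m₂ a : ℂ) • Finsupp.single (r + m₂) y, 0) : TorLoop N gl × TorK N)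
      = (m₂ a : ℂ) • ((Finsupp.single (r + m₂) y, 0) : TorLoop N gl × TorK N) by
    rw [Prod.smul_mk, smul_zero]]
  rw [kassel_smul_left, kassel_smul_right, kassel_single_single, kassel_single_single]
  rw [Prod.smul_mk, Prod.smul_mk, Prod.mk_add_mk, Prod.mk.injEq]
  constructor
  · simp only [← add_assoc, show m₁ + r = r + m₁ from add_comm m₁ r, Pi.add_apply]
    push_cast
    module
  · rw [← kcl_smul, ← kcl_smul, ← kcl_smul, ← kcl_smul, ← kcl_smul, ← kcl_add]
    apply kcl_eq_kcl ((B x y * (-(m₁ a : ℂ))) • tpow (r + m₁ + m₂))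
    funext p
    simp only [Pi.sub_apply, Pi.add_apply, Pi.smul_apply, dFull_apply, map_smul, dOp_tpow,
      LOm_monomial, rmul_smul_right, rmul_tpow_tpow, smul_smul]
    simp only [← add_assoc, show m₁ + r = r + m₁ from add_comm m₁ r, Pi.add_apply]
    push_cast
    module

lemma kassel_zero_left' (v : TorLoop N gl × TorK N) : kassel B 0 v = 0 :=
  kassel_zero_left B 0 v

lemma kassel_zero_right' (u : TorLoop N gl × TorK N) : kassel B u 0 = 0 :=
  kassel_zero_right B 0 u

lemma deriv_key (a : TorIdx N) (r : TorIdx N → ℤ) (w z : TorLoop N gl) :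
    Amap (Pi.single a (tpow r))
        (kassel B (LinearMap.inl ℂ (TorLoop N gl) (TorK N) w)
          (LinearMap.inl ℂ (TorLoop N gl) (TorK N) z))
      = kassel B (LinearMap.inl ℂ (TorLoop N gl) (TorK N) (Aloop (Pi.single a (tpow r)) w))
          (LinearMap.inl ℂ (TorLoop N gl) (TorK N) z)
        + kassel B (LinearMap.inl ℂ (TorLoop N gl) (TorK N) w)
            (LinearMap.inl ℂ (TorLoop N gl) (TorK N) (Aloop (Pi.single a (tpow r)) z)) := by
  induction w using Finsupp.induction_linear with
  | zero => simp only [map_zero, kassel_zero_left', zero_add, map_zero]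
  | add f h hf hh =>
      simp only [map_add, kassel_add_left, hf, hh]
      abel
  | single m₁ x =>
      induction z using Finsupp.induction_linear with
      | zero => simp only [map_zero, kassel_zero_right', kassel_zero_left', add_zero, map_zero]
      | add f h hf hh =>
          simp only [map_add, kassel_add_right, hf, hh]
          abel
      | single m₂ y => exact deriv_single_single B a r m₁ m₂ x y

lemma Amap_deriv (X : TorD N) (u v : TorLoop N gl × TorK N) :
    Amap X (kassel B u v) = kassel B (Amap X u) v + kassel B u (Amap X v) := by
  have mono : ∀ (a : TorIdx N) (r : TorIdx N → ℤ) (u v : TorLoop N gl × TorK N),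
      Amap (Pi.single a (tpow r)) (kassel B u v)
        = kassel B (Amap (Pi.single a (tpow r)) u) v
          + kassel B u (Amap (Pi.single a (tpow r)) v) := by
    intro a r u v
    rw [← kassel_fst B u v 0 0, ← kassel_fst B (Amap (Pi.single a (tpow r)) u) v 0 0,
      ← kassel_fst B u (Amap (Pi.single a (tpow r)) v) 0 0]
    exact deriv_key B a r u.1 v.1
  refine torD_ind (F := fun X => Amap X (kassel B u v))
    (G := fun X => kassel B (Amap X u) v + kassel B u (Amap X v)) ?_ ?_ ?_ X
  · constructor
    · intro X X'; rw [Amap_add, LinearMap.add_apply]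
    · intro c X; rw [Amap_smul, LinearMap.smul_apply]
  · constructor
    · intro X X'
      rw [Amap_add, LinearMap.add_apply, LinearMap.add_apply, kassel_add_left,
        kassel_add_right]
      abel
    · intro c X
      rw [Amap_smul, LinearMap.smul_apply, LinearMap.smul_apply, kassel_smul_left,
        kassel_smul_right, smul_add]
  · intro a r; exact mono a r u v

end Deriv

end Aux

/-- The formulas `[t^r d_a, t^m ⊗ g] = m_a t^{r+m} ⊗ g` and
`[t^r d_a, t^m k_b] = m_a t^{r+m} k_b + δ_{ab} Σ_p r_p t^{r+m} k_p` define an action of the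
Lie algebra `D` of vector fields on the `N+1`-torus on the Kassel central extension
`(R ⊗ ġ) ⊕ K` by derivations: there is a map `A` from `D` to linear operators on
`(R ⊗ ġ) ⊕ K`, linear in the vector field, given on basis elements by the above formulas,
which is a homomorphism of Lie algebras and whose image consists of derivations of the
Kassel bracket. -/
theorem statement1 (N : ℕ) (hN : 1 ≤ N) (g : Type*) [LieRing g] [LieAlgebra ℂ g]
    [FiniteDimensional ℂ g] [LieAlgebra.IsSimple ℂ g]
    (B : LinearMap.BilinForm ℂ g)
    (hsymm : ∀ x y : g, B x y = B y x)
    (hinv : ∀ x y z : g, B ⁅x, y⁆ z = B x ⁅y, z⁆)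
    (hnd : ∀ x : g, x ≠ 0 → ∃ y : g, B x y ≠ 0) :
    ∃ A : TorD N → (TorLoop N g × TorK N) →ₗ[ℂ] (TorLoop N g × TorK N),
      -- `A` is linear in the vector field
      IsLinearMap ℂ A ∧
      -- `[t^r d_a, t^m ⊗ x] = m_a t^{r+m} ⊗ x`
      (∀ (r : TorIdx N → ℤ) (a : TorIdx N) (m : TorIdx N → ℤ) (x : g),
        A (Pi.single a (tpow r)) (Finsupp.single m x, 0)
          = ((m a : ℂ) • Finsupp.single (r + m) x, 0)) ∧
      -- `[t^r d_a, t^m k_b] = m_a t^{r+m} k_b + δ_{ab} Σ_p r_p t^{r+m} k_p`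
      (∀ (r : TorIdx N → ℤ) (a : TorIdx N) (m : TorIdx N → ℤ) (b : TorIdx N),
        A (Pi.single a (tpow r)) (0, kcl (Pi.single b (tpow m)))
          = (0, (m a : ℂ) • kcl (Pi.single b (tpow (r + m)))
              + (if a = b then kcl fun p => (r p : ℂ) • tpow (r + m) else 0))) ∧
      -- `A` is a homomorphism of Lie algebras
      (∀ X Y : TorD N, A (dBracket X Y) = A X ∘ₗ A Y - A Y ∘ₗ A X) ∧
      -- each `A X` is a derivation of the Kassel bracket
      (∀ (X : TorD N) (u v : TorLoop N g × TorK N),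
        A X (kassel B u v) = kassel B (A X u) v + kassel B u (A X v)) := by
  refine ⟨Amap, ⟨fun X Y => Amap_add X Y, fun c X => Amap_smul c X⟩,
    fun r a m x => Amap_loop_monomial a r m x,
    fun r a m b => Amap_K_monomial a r b m,
    fun X Y => Amap_hom X Y,
    fun X u v => Amap_deriv B X u v⟩
end
end

section
/- For every μ ∈ ℂ, the symmetric invariant bilinear form B on the toroidal extended affine Lie algebra g_div(μ) = (R⊗ġ) ⊕ K ⊕ D_div is non-degenerate: for every nonzero x ∈ g_div(μ) there exists y ∈ g_div(μ) with B(x,y) ≠ 0. -/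
noncomputable section

/-- The underlying space of the full toroidal Lie algebra `g(μ) = (R ⊗ ġ) ⊕ K ⊕ D`. -/
abbrev TorG (N : ℕ) (g : Type*) [AddCommGroup g] [Module ℂ g] :=
  TorLoop N g × TorK N × TorD N

section Generators

variable {N : ℕ} {g : Type*} [LieRing g] [LieAlgebra ℂ g]

/-- The element `t^r ⊗ x` of `(R ⊗ ġ) ⊕ K ⊕ D`. -/
def G1 (r : TorIdx N → ℤ) (x : g) : TorG N g := (Finsupp.single r x, 0, 0)

/-- The element of `(R ⊗ ġ) ⊕ K ⊕ D` given by the class of a 1-form `ω` in `K`. -/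
def GK (ω : TorOmega N) : TorG N g := (0, kcl ω, 0)

/-- The element `t^r d_a` of `(R ⊗ ġ) ⊕ K ⊕ D`. -/
def G3 (r : TorIdx N → ℤ) (a : TorIdx N) : TorG N g := (0, 0, Pi.single a (tpow r))

end Generators

/-- The defining properties of the bracket of the full toroidal Lie algebra `g(μ)`:
bilinearity, the structure formulas
`[f₁⊗g₁, f₂⊗g₂] = f₁f₂⊗[g₁,g₂] + (g₁|g₂) f₂ d(f₁)`, `K` central in `(R⊗ġ)⊕K`,
`[t^r d_a, t^m⊗g] = m_a t^{r+m}⊗g`,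
`[t^r d_a, t^m k_b] = m_a t^{r+m} k_b + δ_{ab} Σ_p r_p t^{r+m} k_p`,
`[t^r d_a, t^m d_b] = m_a t^{r+m} d_b − r_b t^{r+m} d_a + μ m_a r_b Σ_p m_p t^{r+m} k_p`,
together with the bracket being alternating and satisfying the Jacobi identity. -/
def IsToroidalBracket {N : ℕ} {g : Type*} [LieRing g] [LieAlgebra ℂ g]
    (B : LinearMap.BilinForm ℂ g) (μ : ℂ)
    (br : TorG N g → TorG N g → TorG N g) : Prop :=
  -- bilinearity
  (∀ y : TorG N g, IsLinearMap ℂ fun x => br x y) ∧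
  (∀ x : TorG N g, IsLinearMap ℂ fun y => br x y) ∧
  -- alternating
  (∀ x : TorG N g, br x x = 0) ∧
  -- Jacobi identity
  (∀ x y z : TorG N g, br (br x y) z + br (br y z) x + br (br z x) y = 0) ∧
  -- `[t^r ⊗ x, t^m ⊗ y] = t^{r+m} ⊗ [x,y] + (x|y)·(class of t^m d(t^r))`
  (∀ (r m : TorIdx N → ℤ) (x y : g),
    br (G1 r x) (G1 m y)
      = (Finsupp.single (r + m) ⁅x, y⁆,
          B x y • kcl fun p => (r p : ℂ) • tpow (r + m), 0)) ∧
  -- `K` is central in `(R ⊗ ġ) ⊕ K`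
  (∀ (r : TorIdx N → ℤ) (x : g) (ω : TorOmega N),
    br (G1 r x) (GK ω) = 0 ∧ br (GK ω) (G1 r x) = 0) ∧
  (∀ ω ω' : TorOmega N, br (GK ω) (GK ω') = 0) ∧
  -- `[t^r d_a, t^m ⊗ y] = m_a t^{r+m} ⊗ y`
  (∀ (r : TorIdx N → ℤ) (a : TorIdx N) (m : TorIdx N → ℤ) (y : g),
    br (G3 r a) (G1 m y) = ((m a : ℂ) • Finsupp.single (r + m) y, 0, 0)) ∧
  -- `[t^r d_a, t^m k_b] = m_a t^{r+m} k_b + δ_{ab} Σ_p r_p t^{r+m} k_p`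
  (∀ (r : TorIdx N → ℤ) (a : TorIdx N) (m : TorIdx N → ℤ) (b : TorIdx N),
    br (G3 r a) (GK (Pi.single b (tpow m)))
      = (0, (m a : ℂ) • kcl (Pi.single b (tpow (r + m)))
          + (if a = b then kcl fun p => (r p : ℂ) • tpow (r + m) else 0), 0)) ∧
  -- `[t^r d_a, t^m d_b] = m_a t^{r+m} d_b − r_b t^{r+m} d_a + μ m_a r_b Σ_p m_p t^{r+m} k_p`
  (∀ (r : TorIdx N → ℤ) (a : TorIdx N) (m : TorIdx N → ℤ) (b : TorIdx N),
    br (G3 r a) (G3 m b)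
      = (0, (μ * (m a : ℂ) * (r b : ℂ)) • kcl fun p => (m p : ℂ) • tpow (r + m),
          (m a : ℂ) • (Pi.single b (tpow (r + m)) : TorD N)
            - (r b : ℂ) • (Pi.single a (tpow (r + m)) : TorD N)))


/-- The defining properties of the invariant bilinear form `B` on the toroidal extended
affine Lie algebra `g_div(μ) = (R⊗ġ) ⊕ K ⊕ D_div`: it is bilinear,
`B(t^r⊗g₁, t^m⊗g₂) = δ_{r,−m}(g₁|g₂)`,
`B(Σ_p a_p t^r d_p, t^m k_q) = δ_{r,−m} a_q = B(t^m k_q, Σ_p a_p t^r d_p)` for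
divergence-zero vector fields, and it vanishes on `(R⊗ġ) × (K ⊕ D_div)`,
on `D_div × D_div` and on `K × K`. -/
def IsToroidalForm {N : ℕ} {g : Type*} [LieRing g] [LieAlgebra ℂ g]
    (B : LinearMap.BilinForm ℂ g) (Bf : TorG N g → TorG N g → ℂ) : Prop :=
  -- bilinearity
  (∀ y : TorG N g, IsLinearMap ℂ fun x => Bf x y) ∧
  (∀ x : TorG N g, IsLinearMap ℂ fun y => Bf x y) ∧
  -- `(t^r ⊗ g₁ | t^m ⊗ g₂) = δ_{r,−m} (g₁|g₂)`
  (∀ (r m : TorIdx N → ℤ) (x y : g),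
    Bf (G1 r x) (G1 m y) = if r + m = 0 then B x y else 0) ∧
  -- `(Σ_p a_p t^r d_p | t^m k_q) = δ_{r,−m} a_q`, both ways, for divergence-zero fields
  (∀ (a : TorIdx N → ℂ) (r : TorIdx N → ℤ), (∑ p, a p * (r p : ℂ)) = 0 →
    ∀ (m : TorIdx N → ℤ) (q : TorIdx N),
      Bf (0, 0, fun p => a p • tpow r) (GK (Pi.single q (tpow m)))
        = (if r + m = 0 then a q else 0) ∧
      Bf (GK (Pi.single q (tpow m))) (0, 0, fun p => a p • tpow r)
        = (if r + m = 0 then a q else 0)) ∧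
  -- `(R ⊗ ġ | K ⊕ D_div) = 0`
  (∀ (u : TorLoop N g) (k : TorK N) (X : TorD N), divMap N X = 0 →
    Bf (u, 0, 0) (0, k, X) = 0 ∧ Bf (0, k, X) (u, 0, 0) = 0) ∧
  -- `(D_div | D_div) = 0`
  (∀ X Y : TorD N, divMap N X = 0 → divMap N Y = 0 →
    Bf (0, 0, X) (0, 0, Y) = 0) ∧
  -- `(K | K) = 0`
  (∀ k k' : TorK N, Bf (0, k, 0) (0, k', 0) = 0)

/-!
The form pairs `R ⊗ ġ` with itself degree by degree through `(·|·)`, and `D_div` with `K`;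
all other pairings vanish. A nonzero loop component `u` is detected by some `t^{-r} ⊗ v`, and
a nonzero divergence-free field `X`, split into its homogeneous (still divergence-free)
components, by some `t^{-r} k_q`. For the class of a 1-form `ω` orthogonal to `D_div`,
pairing with the fields `Σ_p a_p t^{-s} d_p`, `a ⬝ s = 0`, shows that the coefficient vector
`(ω_q(s))_q` of `ω` in degree `s` is orthogonal to `s^⊥`, hence proportional to `s`;
that is, `ω = d f` and its class in `K` is zero.
-/

theorem exists_eq_smul_of_forall_dotProduct_eq_zero_imp {𝕜 ι : Type*} [Field 𝕜] [Fintype ι]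
    [DecidableEq ι] {s c : ι → 𝕜} (h : ∀ a : ι → 𝕜, a ⬝ᵥ s = 0 → a ⬝ᵥ c = 0) :
    ∃ t : 𝕜, c = t • s := by
  have hker : ⨅ _ : Unit, LinearMap.ker (Fintype.linearCombination 𝕜 s)
      ≤ LinearMap.ker (Fintype.linearCombination 𝕜 c) := fun a ha => by
    simp only [Submodule.mem_iInf, LinearMap.mem_ker, Fintype.linearCombination_apply,
      smul_eq_mul] at ha ⊢
    exact h a (ha ())
  obtain ⟨t, ht⟩ :=
    Submodule.mem_span_singleton.1 (by simpa using mem_span_of_iInf_ker_le_ker hker)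
  refine ⟨t, funext fun q => ?_⟩
  simpa using (LinearMap.congr_fun ht (Pi.single q 1)).symm

section Torus

variable {N : ℕ}

lemma dOp_apply (p : TorIdx N) (f : TorR N) (s : TorIdx N → ℤ) :
    dOp p f s = s p * f s := by
  induction f using Finsupp.induction_linear with
  | zero => simp
  | add f f' hf hf' => simp [hf, hf', mul_add]
  | single r c => by_cases h : r = s <;> simp [dOp, h]

lemma divMap_apply (X : TorD N) (s : TorIdx N → ℤ) :
    divMap N X s = ∑ p, X p s * s p := by
  simp [divMap, Finsupp.finsetSum_apply, dOp_apply, mul_comm]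

lemma divMap_smul_tpow_eq_zero {a : TorIdx N → ℂ} {r : TorIdx N → ℤ}
    (h : ∑ p, a p * r p = 0) : divMap N (fun p => a p • tpow r) = 0 := by
  ext s
  by_cases hrs : r = s
  · subst hrs; simpa [divMap_apply, tpow] using h
  · simp [divMap_apply, tpow, hrs]

lemma sum_smul_tpow_eq (X : TorD N) {S : Finset (TorIdx N → ℤ)}
    (hS : ∀ p, (X p).support ⊆ S) :
    ∑ s ∈ S, (fun p => X p s • tpow s) = X := by
  funext p
  simp only [Finset.sum_apply, tpow, Finsupp.smul_single, smul_eq_mul, mul_one]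
  exact (Finsupp.sum_of_support_subset _ (hS p) _ (by simp)).symm.trans (X p).sum_single

lemma mem_range_dFull_of_forall_exists_eq_mul (ω : TorOmega N)
    (h : ∀ s, ∃ c : ℂ, ∀ q, ω q s = c * s q) : ω ∈ LinearMap.range (dFull N) := by
  choose c hc using h
  classical
  let T := Finset.univ.biUnion fun q => (ω q).support
  refine ⟨∑ s ∈ T, Finsupp.single s (c s), funext fun q => Finsupp.ext fun s => ?_⟩
  by_cases hs : s ∈ T
  · simp [dFull, dOp_apply, Finsupp.finsetSum_apply, Finsupp.single_apply, hs, hc s q, mul_comm]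
  · have hω : ω q s = 0 := Finsupp.notMem_support_iff.1 fun h =>
      hs (Finset.mem_biUnion.2 ⟨q, Finset.mem_univ _, h⟩)
    simp [dFull, dOp_apply, Finsupp.finsetSum_apply, Finsupp.single_apply, hs, hω]

end Torus

namespace IsToroidalForm

variable {N : ℕ} {g : Type*} [LieRing g] [LieAlgebra ℂ g] {B : LinearMap.BilinForm ℂ g}
  {Bf : TorG N g → TorG N g → ℂ}

lemma map_sum_left (hBf : IsToroidalForm B Bf) (y : TorG N g) {ι : Type*} (t : Finset ι)
    (x : ι → TorG N g) : Bf (∑ i ∈ t, x i) y = ∑ i ∈ t, Bf (x i) y :=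
  map_sum (IsLinearMap.mk' _ (hBf.1 y)) x t

lemma apply_loop_G1_neg (hBf : IsToroidalForm B Bf) (u : TorLoop N g) (r : TorIdx N → ℤ)
    (v : g) : Bf (u, 0, 0) (G1 (-r) v) = B (u r) v := by
  induction u using Finsupp.induction_linear with
  | zero =>
    rw [Finsupp.coe_zero, Pi.zero_apply, map_zero, LinearMap.zero_apply]
    exact (hBf.1 _).map_zero
  | add u u' hu hu' =>
    have hsplit : ((u + u', 0, 0) : TorG N g) = (u, 0, 0) + (u', 0, 0) := by simp
    rw [hsplit, (hBf.1 _).map_add, hu, hu', Finsupp.add_apply, map_add, LinearMap.add_apply]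
  | single s x =>
    by_cases hs : s = r <;>
      simpa [G1, Finsupp.single_apply, add_neg_eq_zero, hs] using hBf.2.2.1 s (-r) x v

lemma apply_field_GK_neg (hBf : IsToroidalForm B Bf) {X : TorD N} (hX : divMap N X = 0)
    (q : TorIdx N) (r : TorIdx N → ℤ) :
    Bf (0, 0, X) (GK (Pi.single q (tpow (-r)))) = X q r := by
  classical
  set S := insert r (Finset.univ.biUnion fun p => (X p).support)
  have hS : ∀ p, (X p).support ⊆ S := fun p s hs =>
    Finset.mem_insert_of_mem (Finset.mem_biUnion.2 ⟨p, Finset.mem_univ _, hs⟩)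
  have hdiv : ∀ s, ∑ p, X p s * s p = 0 := fun s => by rw [← divMap_apply, hX]; rfl
  let incl : TorD N →ₗ[ℂ] TorG N g := (LinearMap.inr ℂ _ _).comp (LinearMap.inr ℂ _ _)
  calc Bf (incl X) (GK (Pi.single q (tpow (-r))))
      = ∑ s ∈ S, Bf (incl fun p => X p s • tpow s) (GK (Pi.single q (tpow (-r)))) := by
        rw [← hBf.map_sum_left, ← map_sum, sum_smul_tpow_eq X hS]
    _ = ∑ s ∈ S, if s = r then X q s else 0 := Finset.sum_congr rfl fun s _ =>
        (hBf.2.2.2.1 _ s (hdiv s) (-r) q).1.trans (by simp [add_neg_eq_zero])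
    _ = X q r := by simp [S]

lemma apply_GK_field_neg (hBf : IsToroidalForm B Bf) (ω : TorOmega N) {a : TorIdx N → ℂ}
    {s : TorIdx N → ℤ} (ha : ∑ p, a p * s p = 0) :
    Bf (GK ω) (0, 0, fun p => a p • tpow (-s)) = ∑ q, a q * ω q s := by
  have ha' : ∑ p, a p * ((-s) p : ℤ) = 0 := by simp [ha]
  let Y : TorG N g := (0, 0, fun p => a p • tpow (-s))
  let lhs : TorOmega N →ₗ[ℂ] ℂ := (IsLinearMap.mk' _ (hBf.1 Y)).comp
    ((LinearMap.inr ℂ _ _).comp ((LinearMap.inl ℂ _ _).comp (LinearMap.range (dFull N)).mkQ))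
  let rhs : TorOmega N →ₗ[ℂ] ℂ := ∑ q, a q • (Finsupp.lapply s).comp (LinearMap.proj q)
  suffices lhs = rhs from by simpa [lhs, rhs, GK, kcl, mul_comm] using LinearMap.congr_fun this ω
  refine LinearMap.pi_ext' fun q => Finsupp.lhom_ext fun m c => ?_
  have hsingle : Pi.single q (Finsupp.single m c) = c • (Pi.single q (tpow m) : TorOmega N) := by
    simp [tpow, ← Pi.single_smul]
  have hval : Bf (GK (Pi.single q (tpow m))) Y = if -s + m = 0 then a q else 0 :=
    (hBf.2.2.2.1 a (-s) ha' m q).2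
  calc lhs (Pi.single q (Finsupp.single m c))
      = c * Bf (GK (Pi.single q (tpow m))) Y := by rw [hsingle, map_smul]; rfl
    _ = rhs (Pi.single q (Finsupp.single m c)) := by
        simp [hval, rhs, Pi.single_apply, Finsupp.single_apply, neg_add_eq_zero,
          apply_ite (fun f : TorR N => f s), mul_comm, eq_comm]

lemma exists_divFree_apply_ne_zero_of_loop_ne_zero (hBf : IsToroidalForm B Bf)
    (hnd : ∀ x : g, x ≠ 0 → ∃ y : g, B x y ≠ 0) {u : TorLoop N g} {k : TorK N} {X : TorD N}
    (hX : divMap N X = 0) (hu : u ≠ 0) :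
    ∃ y : TorG N g, divMap N y.2.2 = 0 ∧ Bf (u, k, X) y ≠ 0 := by
  obtain ⟨r, hr⟩ := Finsupp.ne_iff.1 hu
  obtain ⟨v, hv⟩ := hnd (u r) hr
  refine ⟨G1 (-r) v, map_zero _, ?_⟩
  have hsplit : ((u, k, X) : TorG N g) = (u, 0, 0) + (0, k, X) := by simp
  have hKD : Bf (0, k, X) (G1 (-r) v) = 0 := (hBf.2.2.2.2.1 _ k X hX).2
  rwa [hsplit, (hBf.1 _).map_add, hBf.apply_loop_G1_neg, hKD, add_zero]

lemma exists_divFree_apply_ne_zero_of_field_ne_zero (hBf : IsToroidalForm B Bf) {k : TorK N}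
    {X : TorD N} (hX : divMap N X = 0) (hX0 : X ≠ 0) :
    ∃ y : TorG N g, divMap N y.2.2 = 0 ∧ Bf (0, k, X) y ≠ 0 := by
  obtain ⟨q, hq⟩ := Function.ne_iff.1 hX0
  obtain ⟨r, hr⟩ := Finsupp.ne_iff.1 hq
  refine ⟨GK (Pi.single q (tpow (-r))), map_zero _, ?_⟩
  have hsplit : ((0, k, X) : TorG N g) = (0, k, 0) + (0, 0, X) := by simp
  have hKK : Bf (0, k, 0) (GK (Pi.single q (tpow (-r)))) = 0 := hBf.2.2.2.2.2.2 k _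
  rwa [hsplit, (hBf.1 _).map_add, hKK, zero_add, hBf.apply_field_GK_neg hX]

lemma exists_divFree_apply_ne_zero_of_central_ne_zero (hBf : IsToroidalForm B Bf) {k : TorK N}
    (hk : k ≠ 0) : ∃ y : TorG N g, divMap N y.2.2 = 0 ∧ Bf (0, k, 0) y ≠ 0 := by
  obtain ⟨ω, rfl⟩ := Submodule.Quotient.mk_surjective _ k
  by_contra! hperp
  refine hk ((Submodule.Quotient.mk_eq_zero _).2 (mem_range_dFull_of_forall_exists_eq_mul ω
    fun s => ?_))
  obtain ⟨c, hc⟩ := exists_eq_smul_of_forall_dotProduct_eq_zero_imp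
    (s := fun p => (s p : ℂ)) (c := fun q => ω q s) fun a ha => by
      rw [dotProduct, ← hBf.apply_GK_field_neg ω ha]
      exact hperp _ (divMap_smul_tpow_eq_zero (by simpa [dotProduct] using ha))
  exact ⟨c, fun q => by simpa using congrFun hc q⟩

end IsToroidalForm

theorem statement7_general (N : ℕ) (g : Type*) [LieRing g] [LieAlgebra ℂ g]
    (B : LinearMap.BilinForm ℂ g)
    (hnd : ∀ x : g, x ≠ 0 → ∃ y : g, B x y ≠ 0)
    (Bf : TorG N g → TorG N g → ℂ)
    (hBf : IsToroidalForm B Bf) :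
    ∀ x : TorG N g, divMap N x.2.2 = 0 → x ≠ 0 →
      ∃ y : TorG N g, divMap N y.2.2 = 0 ∧ Bf x y ≠ 0 := by
  rintro ⟨u, k, X⟩ (hX : divMap N X = 0) hx
  by_cases hu : u = 0
  · subst hu
    by_cases hX0 : X = 0
    · subst hX0
      exact hBf.exists_divFree_apply_ne_zero_of_central_ne_zero fun hk => hx (by simp [hk])
    · exact hBf.exists_divFree_apply_ne_zero_of_field_ne_zero hX hX0
  · exact hBf.exists_divFree_apply_ne_zero_of_loop_ne_zero hnd hX hu

/-- For every `μ ∈ ℂ`, the symmetric invariant bilinear form `B` on the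
toroidal extended affine Lie algebra `g_div(μ) = (R⊗ġ) ⊕ K ⊕ D_div` is non-degenerate:
for every nonzero `x ∈ g_div(μ)` there exists `y ∈ g_div(μ)` with `B(x,y) ≠ 0`. -/
theorem statement7 (N : ℕ) (hN : 1 ≤ N) (g : Type*) [LieRing g] [LieAlgebra ℂ g]
    [FiniteDimensional ℂ g] [LieAlgebra.IsSimple ℂ g]
    (B : LinearMap.BilinForm ℂ g)
    (hsymm : ∀ x y : g, B x y = B y x)
    (hinv : ∀ x y z : g, B ⁅x, y⁆ z = B x ⁅y, z⁆)
    (hnd : ∀ x : g, x ≠ 0 → ∃ y : g, B x y ≠ 0)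
    (μ : ℂ) (Bf : TorG N g → TorG N g → ℂ)
    (hBf : IsToroidalForm B Bf) :
    ∀ x : TorG N g, divMap N x.2.2 = 0 → x ≠ 0 →
      ∃ y : TorG N g, divMap N y.2.2 = 0 ∧ Bf x y ≠ 0 :=
  statement7_general N g B hnd Bf hBf
end
end
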